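/- Let V*_{ps}(ℝ) = {X ∈ ℝ^{(p+s)×p} : det Z ≠ 0} with s = p + 2r and Z = X₀ + iX₁, W = X₂ + iX₃ (blocks X₀, X₁ ∈ ℝ^{p×p}, X₂, X₃ ∈ ℝ^{r×p}). Then the complex-valued components of φ : X ↦ W · Z⁻¹ satisfy τ(φ) = 0 and κ(φ,ψ) = 0 for any two components φ, ψ, where τ and κ are the Euclidean Laplacian-type and conformality operators in the coordinates z_{kl}, w_{kl}. -/

import Mathlib

/-! The map `(Z, W) ↦ W Z⁻¹` is holomorphic on the open set `det Z ≠ 0`, since the entries of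
`Z⁻¹ = (det Z)⁻¹ • adj Z` are rational in the entries of `Z`. For `φ` holomorphic near the
point, every `∂φ/∂z̄` vanishes on a neighbourhood, so its `∂/∂z` vanishes too and `τ(φ) = 0`;
every term of `κ(φ, ψ)` has a factor `∂φ/∂z̄` or `∂ψ/∂z̄`. -/

open Matrix Complex

noncomputable section

/-- complex coordinates `(Z, W) ∈ ℂ^{p×p} × ℂ^{r×p}` on `ℝ^{(p+s)×p}`, `s = p + 2r`. -/
abbrev CSpace (p r : ℕ) := (Fin p → Fin p → ℂ) × (Fin r → Fin p → ℂ)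

def bC (n p : ℕ) (k : Fin n) (l : Fin p) : Fin n → Fin p → ℂ :=
  fun a b => if a = k ∧ b = l then 1 else 0

def eZ (p r : ℕ) (k l : Fin p) : CSpace p r := (bC p p k l, 0)
def eW (p r : ℕ) (k : Fin r) (l : Fin p) : CSpace p r := (0, bC r p k l)

def wd (p r : ℕ) (f : CSpace p r → ℂ) (x v : CSpace p r) : ℂ :=
  (fderiv ℝ f x v - Complex.I * fderiv ℝ f x (Complex.I • v)) / 2

def wdbar (p r : ℕ) (f : CSpace p r → ℂ) (x v : CSpace p r) : ℂ :=
  (fderiv ℝ f x v + Complex.I * fderiv ℝ f x (Complex.I • v)) / 2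

/-- Euclidean `τ(φ) = 4 Σ ∂²φ/∂z∂z̄ + 4 Σ ∂²φ/∂w∂w̄`. -/
def tauC (p r : ℕ) (f : CSpace p r → ℂ) (x : CSpace p r) : ℂ :=
  (4 : ℂ) * ∑ k : Fin p, ∑ l : Fin p,
      wd p r (fun y => wdbar p r f y (eZ p r k l)) x (eZ p r k l)
    + 4 * ∑ k : Fin r, ∑ l : Fin p,
      wd p r (fun y => wdbar p r f y (eW p r k l)) x (eW p r k l)

/-- Euclidean conformality operator `κ`. -/
def kapC (p r : ℕ) (f g : CSpace p r → ℂ) (x : CSpace p r) : ℂ :=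
  (2 : ℂ) * ∑ k : Fin p, ∑ l : Fin p,
      (wd p r f x (eZ p r k l) * wdbar p r g x (eZ p r k l)
        + wdbar p r f x (eZ p r k l) * wd p r g x (eZ p r k l))
    + 2 * ∑ k : Fin r, ∑ l : Fin p,
      (wd p r f x (eW p r k l) * wdbar p r g x (eW p r k l)
        + wdbar p r f x (eW p r k l) * wd p r g x (eW p r k l))

open Filter Topology

section MatrixDifferentiable

variable {𝕜 E n : Type*} [NontriviallyNormedField 𝕜] [NormedAddCommGroup E] [NormedSpace 𝕜 E]
  [Fintype n] [DecidableEq n] {A : E → Matrix n n 𝕜} {x : E}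

theorem DifferentiableAt.matrix_det (hA : ∀ i j, DifferentiableAt 𝕜 (fun y => A y i j) x) :
    DifferentiableAt 𝕜 (fun y => (A y).det) x := by
  simp only [det_apply]
  exact .fun_sum fun σ _ =>
    (HasFDerivAt.finsetProd fun i _ => (hA _ _).hasFDerivAt).differentiableAt.const_smul _

theorem DifferentiableAt.matrix_adjugate_apply
    (hA : ∀ i j, DifferentiableAt 𝕜 (fun y => A y i j) x) (i j : n) :
    DifferentiableAt 𝕜 (fun y => (A y).adjugate i j) x := by
  simp only [adjugate_apply]
  refine .matrix_det fun k l => ?_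
  by_cases hk : k = j
  · simp only [hk, updateRow_self]
    exact differentiableAt_const _
  · simpa only [updateRow_ne hk] using hA k l

theorem DifferentiableAt.matrix_inv_apply
    (hA : ∀ i j, DifferentiableAt 𝕜 (fun y => A y i j) x) (hdet : (A x).det ≠ 0) (i j : n) :
    DifferentiableAt 𝕜 (fun y => (A y)⁻¹ i j) x := by
  simp only [Matrix.inv_def, Ring.inverse_eq_inv', Matrix.smul_apply, smul_eq_mul]
  exact ((DifferentiableAt.matrix_det hA).inv hdet).mul (.matrix_adjugate_apply hA i j)

end MatrixDifferentiable

theorem isOpen_setOf_det_ne_zero (p r : ℕ) :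
    IsOpen {y : CSpace p r | (Matrix.of y.1).det ≠ 0} :=
  isOpen_ne_fun (by fun_prop) continuous_const

theorem differentiableAt_mul_inv_apply {p r : ℕ} (i : Fin r) (j : Fin p) {x : CSpace p r}
    (hx : (Matrix.of x.1).det ≠ 0) :
    DifferentiableAt ℂ (fun y : CSpace p r => (Matrix.of y.2 * (Matrix.of y.1)⁻¹) i j) x := by
  simp only [mul_apply, of_apply]
  refine .fun_sum fun k _ => .mul (by fun_prop) ?_
  exact DifferentiableAt.matrix_inv_apply (A := fun y : CSpace p r => Matrix.of y.1)
    (fun a b => by simp only [of_apply]; fun_prop) hx k j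

section WirtingerDerivatives

variable {p r : ℕ} {f g : CSpace p r → ℂ} {x : CSpace p r}

theorem wdbar_eq_zero_of_differentiableAt (hf : DifferentiableAt ℂ f x) (v : CSpace p r) :
    wdbar p r f x v = 0 := by
  rw [wdbar, hf.fderiv_restrictScalars (𝕜 := ℝ)]
  simp only [ContinuousLinearMap.coe_restrictScalars', map_smul, smul_eq_mul]
  linear_combination (fderiv ℂ f x v / 2) * I_mul_I

theorem wd_wdbar_eq_zero_of_eventually_differentiableAt
    (hf : ∀ᶠ y in 𝓝 x, DifferentiableAt ℂ f y) (v w : CSpace p r) :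
    wd p r (fun y => wdbar p r f y v) x w = 0 := by
  have hzero : (fun y => wdbar p r f y v) =ᶠ[𝓝 x] fun _ => 0 :=
    hf.mono fun y hy => wdbar_eq_zero_of_differentiableAt hy v
  simp [wd, hzero.fderiv_eq]

theorem tauC_eq_zero_of_eventually_differentiableAt (hf : ∀ᶠ y in 𝓝 x, DifferentiableAt ℂ f y) :
    tauC p r f x = 0 := by
  simp [tauC, wd_wdbar_eq_zero_of_eventually_differentiableAt hf]

theorem kapC_eq_zero_of_differentiableAt (hf : DifferentiableAt ℂ f x)
    (hg : DifferentiableAt ℂ g x) : kapC p r f g x = 0 := by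
  simp [kapC, wdbar_eq_zero_of_differentiableAt hf, wdbar_eq_zero_of_differentiableAt hg]

end WirtingerDerivatives

/-- on `V*_{ps}(ℝ) = {det Z ≠ 0}`, the components of `Φ*(X) = W Z⁻¹`
satisfy `τ(φ) = 0` and `κ(φ,ψ) = 0` for any two components. -/
theorem stmt9 (p r : ℕ) (i i' : Fin r) (j j' : Fin p) (x : CSpace p r)
    (hx : (Matrix.of x.1).det ≠ 0) :
    tauC p r (fun y => (Matrix.of y.2 * (Matrix.of y.1)⁻¹) i j) x = 0 ∧
    kapC p r (fun y => (Matrix.of y.2 * (Matrix.of y.1)⁻¹) i j)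
      (fun y => (Matrix.of y.2 * (Matrix.of y.1)⁻¹) i' j') x = 0 :=
  ⟨tauC_eq_zero_of_eventually_differentiableAt <|
      ((isOpen_setOf_det_ne_zero p r).eventually_mem hx).mono fun _ hy =>
        differentiableAt_mul_inv_apply i j hy,
    kapC_eq_zero_of_differentiableAt (differentiableAt_mul_inv_apply i j hx)
      (differentiableAt_mul_inv_apply i' j' hx)⟩

end
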